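/- arXiv:1201.0399 — 5 statements merged into one kernel-verified Lean document; each statement's English description precedes it below -/
import Mathlib

section
/- Let A = (a_{jk}) be a 3×3 complex Hermitian matrix, let u, n ∈ ℝ³, and let ρ = (1/2)(I + Σ_j n_j σ_j). Then Σ_j [−i u_j σ_j, ρ] + (1/2) Σ_{j,k} a_{jk} (σ_j ρ σ_k − (1/2)(σ_k σ_j ρ + ρ σ_k σ_j)) = (1/2) Σ_l m_l σ_l, where m = b + 2(u × n) + (A^S − tr(A^S) I) n ∈ ℝ³, A^S is the real symmetric matrix with entries (a_{jk} + a_{kj})/2 (equal to the real part of A since A is Hermitian), and b ∈ ℝ³ has components b_l = i Σ_{j,k} a_{jk} ε_{jkl}, with ε the Levi-Civita symbol. -/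
open Matrix

/-- The Pauli matrices σ₁, σ₂, σ₃ (indexed by `Fin 3`). -/
noncomputable def pauli : Fin 3 → Matrix (Fin 2) (Fin 2) ℂ
  | 0 => !![0, 1; 1, 0]
  | 1 => !![0, -Complex.I; Complex.I, 0]
  | 2 => !![1, 0; 0, -1]

/-- The Levi-Civita symbol on three indices. -/
def levicivita (j k l : Fin 3) : ℝ :=
  if (j, k, l) = (0, 1, 2) ∨ (j, k, l) = (1, 2, 0) ∨ (j, k, l) = (2, 0, 1) then 1
  else if (j, k, l) = (2, 1, 0) ∨ (j, k, l) = (1, 0, 2) ∨ (j, k, l) = (0, 2, 1) then -1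
  else 0

/-- The cross product on ℝ³. -/
def cross (u v : Fin 3 → ℝ) : Fin 3 → ℝ :=
  ![u 1 * v 2 - u 2 * v 1, u 2 * v 0 - u 0 * v 2, u 0 * v 1 - u 1 * v 0]

/-!
Both sides are affine in the Bloch vector, so it suffices to know the two kinds of terms on
`1` and on `n · σ`. The Hamiltonian part is `[v · σ, w · σ] = 2i (v × w) · σ`. In the dissipator,
the identity part of `ρ` contributes `[σ_j, σ_k] = 2i ε_jkl σ_l`, which produces `b`, and the
Bloch part contributes `σ_j (n · σ) σ_k - ½ {σ_k σ_j, n · σ} = n_j σ_k + n_k σ_j - 2 δ_jk (n · σ)`,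
which produces `(A + Aᵀ) n / 2 - tr A n`. Hermiticity of `A` makes `(A + Aᵀ) / 2` and `tr A` real.
-/

open Complex

/-- `v · σ`. -/
noncomputable def pauliDot : (Fin 3 → ℂ) →ₗ[ℂ] Matrix (Fin 2) (Fin 2) ℂ :=
  Fintype.linearCombination ℂ pauli

theorem pauliDot_apply (v : Fin 3 → ℂ) : pauliDot v = ∑ l, v l • pauli l :=
  Fintype.linearCombination_apply ℂ pauli v

noncomputable def blochState (v : Fin 3 → ℂ) : Matrix (Fin 2) (Fin 2) ℂ :=
  (1 / 2 : ℂ) • (1 + pauliDot v)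

theorem pauliDot_mul_sub_mul (v w : Fin 3 → ℂ) :
    pauliDot v * pauliDot w - pauliDot w * pauliDot v = (2 * I) • pauliDot (v ⨯₃ w) := by
  ext a b
  fin_cases a <;> fin_cases b <;>
    simp [pauliDot_apply, pauli, Fin.sum_univ_three, cross_apply] <;> ring_nf <;> simp [I_sq] <;>
    ring

theorem commutator_pauliDot_blochState (c v : Fin 3 → ℂ) :
    pauliDot c * blochState v - blochState v * pauliDot c = I • pauliDot (c ⨯₃ v) := by
  rw [blochState, mul_smul_comm, smul_mul_assoc, ← smul_sub, mul_add, add_mul, mul_one, one_mul,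
    add_sub_add_left_eq_sub, pauliDot_mul_sub_mul, smul_smul, one_div,
    inv_mul_cancel_left₀ two_ne_zero]

theorem pauli_mul_sub_mul (j k : Fin 3) :
    pauli j * pauli k - pauli k * pauli j
      = (2 * I) • pauliDot (fun l => (levicivita j k l : ℂ)) := by
  fin_cases j <;> fin_cases k <;>
    ext a b <;> fin_cases a <;> fin_cases b <;>
    simp [pauliDot_apply, pauli, levicivita] <;> ring_nf <;> simp [I_sq]

section Lindblad

variable {R : Type*} [Ring R] [Algebra ℂ R]

noncomputable def lindbladTerm (L K : R) : R →ₗ[ℂ] R where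
  toFun X := L * X * K - (1 / 2 : ℂ) • (K * L * X + X * (K * L))
  map_add' X Y := by simp only [mul_add, add_mul, smul_add]; abel
  map_smul' c X := by simp [smul_sub, smul_add, smul_comm c]

theorem lindbladTerm_apply (L K X : R) :
    lindbladTerm L K X = L * X * K - (1 / 2 : ℂ) • (K * L * X + X * (K * L)) := rfl

theorem lindbladTerm_one (L K : R) : lindbladTerm L K 1 = L * K - K * L := by
  rw [lindbladTerm_apply, mul_one, one_mul, mul_one, ← two_smul ℂ (K * L), smul_smul]
  norm_num

end Lindblad

theorem lindbladTerm_pauli_pauliDot (j k : Fin 3) (v : Fin 3 → ℂ) :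
    lindbladTerm (pauli j) (pauli k) (pauliDot v)
      = v j • pauli k + v k • pauli j - if j = k then (2 : ℂ) • pauliDot v else 0 := by
  fin_cases j <;> fin_cases k <;>
    ext a b <;> fin_cases a <;> fin_cases b <;>
    simp [lindbladTerm_apply, pauliDot_apply, pauli, Fin.sum_univ_three] <;> ring_nf <;>
    simp [I_sq] <;> ring

theorem sum_smul_lindbladTerm_pauli_one (A : Matrix (Fin 3) (Fin 3) ℂ) :
    ∑ j, ∑ k, A j k • lindbladTerm (pauli j) (pauli k) 1
      = (2 * I) • pauliDot (fun l => ∑ j, ∑ k, A j k * levicivita j k l) := by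
  simp only [lindbladTerm_one, pauli_mul_sub_mul, smul_comm (A _ _), ← Finset.smul_sum,
    ← map_smul, ← map_sum]
  congr 2

theorem sum_smul_lindbladTerm_pauli_pauliDot (A : Matrix (Fin 3) (Fin 3) ℂ) (v : Fin 3 → ℂ) :
    ∑ j, ∑ k, A j k • lindbladTerm (pauli j) (pauli k) (pauliDot v)
      = pauliDot (A *ᵥ v + Aᵀ *ᵥ v - (2 * A.trace) • v) := by
  simp only [lindbladTerm_pauli_pauliDot]
  simp only [map_sub, map_add, map_smul, pauliDot_apply, mulVec, dotProduct, trace, diag,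
    transpose_apply, Fin.sum_univ_three]
  simp only [Fin.isValue, Fin.reduceEq, if_true, if_false]
  module

theorem sum_smul_lindbladTerm_pauli_blochState (A : Matrix (Fin 3) (Fin 3) ℂ) (v : Fin 3 → ℂ) :
    ∑ j, ∑ k, A j k • lindbladTerm (pauli j) (pauli k) (blochState v)
      = pauliDot (I • (fun l => ∑ j, ∑ k, A j k * levicivita j k l)
          + (1 / 2 : ℂ) • ((A + Aᵀ) *ᵥ v) - A.trace • v) := by
  simp only [blochState, map_smul, map_add, smul_add, Finset.sum_add_distrib, ← Finset.smul_sum,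
    smul_comm (A _ _)]
  rw [sum_smul_lindbladTerm_pauli_one, sum_smul_lindbladTerm_pauli_pauliDot, add_mulVec]
  simp only [map_add, map_sub, map_smul]
  module

theorem ofReal_cross (u v : Fin 3 → ℝ) (l : Fin 3) :
    ((cross u v l : ℝ) : ℂ) = ((fun j => (u j : ℂ)) ⨯₃ fun j => (v j : ℂ)) l := by
  fin_cases l <;> simp [cross, cross_apply]

theorem Matrix.IsHermitian.ofReal_re_add_apply {ι : Type*} {A : Matrix ι ι ℂ} (hA : A.IsHermitian)
    (j k : ι) : (((A j k + A k j).re : ℝ) : ℂ) = A j k + A k j := by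
  rw [← conj_eq_iff_re, map_add, ← star_def, hA.apply, hA.apply, add_comm]

/-- Bloch-vector form of the Lindblad-Kossakowski right-hand side:
Σ_j [−i u_j σ_j, ρ] + (1/2) Σ_{j,k} a_{jk} (σ_j ρ σ_k − (1/2){σ_k σ_j, ρ})
  = (1/2) Σ_l m_l σ_l with m = b + 2(u × n) + (Aˢ − tr(Aˢ) I) n. -/
theorem lindblad_bloch_projection
    (A : Matrix (Fin 3) (Fin 3) ℂ) (hA : A.IsHermitian)
    (u n : Fin 3 → ℝ)
    (ρ : Matrix (Fin 2) (Fin 2) ℂ)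
    (hρ : ρ = ((1 : ℂ)/2) • ((1 : Matrix (Fin 2) (Fin 2) ℂ) + ∑ j, (n j : ℂ) • pauli j))
    (AS : Matrix (Fin 3) (Fin 3) ℝ)
    (hAS : ∀ j k, AS j k = ((A j k + A k j) / 2).re)
    (b : Fin 3 → ℝ)
    (hb : ∀ l, (b l : ℂ) = Complex.I * ∑ j, ∑ k, A j k * ((levicivita j k l : ℝ) : ℂ))
    (m : Fin 3 → ℝ)
    (hm : ∀ l, m l = b l + 2 * cross u n l + (AS.mulVec n l - AS.trace * n l)) :
    (∑ j, (((-Complex.I) * (u j : ℂ)) • pauli j * ρ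
            - ρ * (((-Complex.I) * (u j : ℂ)) • pauli j)))
      + ((1 : ℂ)/2) • ∑ j, ∑ k, A j k •
          (pauli j * ρ * pauli k
            - ((1 : ℂ)/2) • (pauli k * pauli j * ρ + ρ * (pauli k * pauli j)))
    = ((1 : ℂ)/2) • ∑ l, (m l : ℂ) • pauli l := by
  set u' : Fin 3 → ℂ := fun j => u j
  set n' : Fin 3 → ℂ := fun j => n j
  have hρ' : ρ = blochState n' := by rw [hρ, blochState, pauliDot_apply]
  have hASC (j k : Fin 3) : (AS j k : ℂ) = (A j k + A k j) / 2 := by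
    rw [hAS, div_ofNat_re, ofReal_div, hA.ofReal_re_add_apply, ofReal_ofNat]
  have hm' : (fun l => (m l : ℂ)) = I • (fun l => ∑ j, ∑ k, A j k * levicivita j k l)
      + 2 • (u' ⨯₃ n') + ((1 / 2 : ℂ) • (A + Aᵀ) *ᵥ n' - A.trace • n') := by
    ext l
    rw [hm l]
    push_cast
    rw [hb l, ofReal_cross]
    simp only [mulVec, dotProduct, trace, diag, Fin.sum_univ_three, Pi.add_apply, Pi.sub_apply,
      Pi.smul_apply, smul_eq_mul, Matrix.add_apply, transpose_apply]
    push_cast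
    simp only [hASC]
    ring
  have hcoherent : I • pauliDot ((fun j => -I * (u j : ℂ)) ⨯₃ n') = pauliDot (u' ⨯₃ n') := by
    change I • pauliDot ((-I • u') ⨯₃ n') = _
    rw [LinearMap.map_smul₂, map_smul, smul_smul, mul_neg, I_mul_I, neg_neg, one_smul]
  rw [hρ', Finset.sum_sub_distrib, ← Finset.sum_mul, ← Finset.mul_sum]
  simp only [← lindbladTerm_apply]
  rw [← pauliDot_apply, ← pauliDot_apply (fun l => (m l : ℂ)), commutator_pauliDot_blochState,
    sum_smul_lindbladTerm_pauli_blochState, hcoherent, hm']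
  simp only [map_add, map_sub, map_smul, map_nsmul]
  module
end

section
/- Let A be a 3×3 complex Hermitian positive semidefinite matrix whose real part is the diagonal matrix diag(a₁,a₂,a₃) with a₁ ≥ a₂ ≥ a₃ ≥ 0, and define b ∈ ℝ³ by b_l = i Σ_{j,k} A_{jk} ε_{jkl} (ε the Levi-Civita symbol; b is real because A is Hermitian). Then f_M(1) ≤ 0, i.e. for every unit vector n ∈ ℝ³ one has Σ_j b_j n_j ≤ Σ_j a_j (1 − n_j²). -/
/-! Writing `z = u + i v` with `u v : ℝ³`, the real part of `z* A z` is
`∑ a_j (u_j² + v_j²) + b ⬝ (u × v)`: the real part of `A` gives the first sum, and contracting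
its imaginary part with `u_j v_k - v_j u_k` gives the triple product with `b`. Positivity of `A`
makes this form nonnegative. For a unit vector `n`, summing the form over the three pairs
`u = n × eᵢ`, `v = u × n` gives `2 (∑ a_j (1 - n_j²) - b ⬝ n)`, because
`∑ᵢ u uᵀ = ∑ᵢ v vᵀ = 1 - n nᵀ` and `u × v = -|u|² n` with `∑ᵢ |u|² = 2`. -/

/-- The rate F(r,n) = Σ_j b_j n_j − r Σ_j a_j (1 − n_j²). -/
noncomputable def F (a b : Fin 3 → ℝ) (r : ℝ) (n : Fin 3 → ℝ) : ℝ :=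
  (∑ j, b j * n j) - r * ∑ j, a j * (1 - n j ^ 2)

/-- f_M(r) = sup { F(r,n) : |n| = 1 }. -/
noncomputable def fM (a b : Fin 3 → ℝ) (r : ℝ) : ℝ :=
  sSup (F a b r '' {n : Fin 3 → ℝ | (∑ j, n j ^ 2) = 1})

/-- f_m(r) = inf { F(r,n) : |n| = 1 }. -/
noncomputable def fm (a b : Fin 3 → ℝ) (r : ℝ) : ℝ :=
  sInf (F a b r '' {n : Fin 3 → ℝ | (∑ j, n j ^ 2) = 1})

open Matrix ComplexOrder

namespace Matrix

theorem re_star_dotProduct_mulVec_mk {ι : Type*} [Fintype ι] (A : Matrix ι ι ℂ) (u v : ι → ℝ) :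
    (star (fun j ↦ (⟨u j, v j⟩ : ℂ)) ⬝ᵥ A *ᵥ fun j ↦ ⟨u j, v j⟩).re =
      ∑ j, ∑ k, ((A j k).re * (u j * u k + v j * v k) - (A j k).im * (u j * v k - v j * u k)) := by
  simp only [dotProduct, mulVec, Finset.mul_sum, Complex.re_sum, Pi.star_apply]
  refine Finset.sum_congr rfl fun j _ ↦ Finset.sum_congr rfl fun k _ ↦ ?_
  simp only [Complex.mul_re, Complex.mul_im, Complex.star_def, Complex.conj_re, Complex.conj_im]
  ring

end Matrix

theorem sum_mul_sub_mul_eq_dotProduct_cross (S : Matrix (Fin 3) (Fin 3) ℝ) (u v : Fin 3 → ℝ) :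
    ∑ j, ∑ k, S j k * (u j * v k - v j * u k) =
      (fun l ↦ ∑ j, ∑ k, levicivita j k l * S j k) ⬝ᵥ u ⨯₃ v := by
  simp only [Fin.sum_univ_three, dotProduct, levicivita, Prod.mk.injEq, ite_mul, one_mul, neg_mul,
    zero_mul, zero_ne_one, false_and, and_false, Fin.reduceEq, true_and, false_or, or_false,
    one_ne_zero, or_self, ↓reduceIte, zero_add, add_zero, cross_apply, Fin.isValue, cons_val_zero,
    cons_val_one, cons_val]
  ring

theorem eq_neg_sum_levicivita_mul_im (A : Matrix (Fin 3) (Fin 3) ℂ) (b : Fin 3 → ℝ)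
    (hb : ∀ l, (b l : ℂ) = Complex.I * ∑ j, ∑ k, A j k * ((levicivita j k l : ℝ) : ℂ)) :
    b = -fun l ↦ ∑ j, ∑ k, levicivita j k l * (A j k).im := by
  ext l
  simpa [Complex.re_sum, Complex.im_sum, mul_comm] using congrArg Complex.re (hb l)

theorem re_star_dotProduct_mulVec_mk_eq {A : Matrix (Fin 3) (Fin 3) ℂ} {a b : Fin 3 → ℝ}
    (hre : ∀ j k, (A j k).re = Matrix.diagonal a j k)
    (hb : ∀ l, (b l : ℂ) = Complex.I * ∑ j, ∑ k, A j k * ((levicivita j k l : ℝ) : ℂ))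
    (u v : Fin 3 → ℝ) :
    (star (fun j ↦ (⟨u j, v j⟩ : ℂ)) ⬝ᵥ A *ᵥ fun j ↦ ⟨u j, v j⟩).re =
      ∑ j, a j * (u j ^ 2 + v j ^ 2) + b ⬝ᵥ u ⨯₃ v := by
  simp only [re_star_dotProduct_mulVec_mk, Finset.sum_sub_distrib, hre, diagonal_apply, ite_mul,
    zero_mul, Finset.sum_ite_eq, Finset.mem_univ, if_true,
    sum_mul_sub_mul_eq_dotProduct_cross (fun j k ↦ (A j k).im), eq_neg_sum_levicivita_mul_im A b hb,
    neg_dotProduct]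
  simp only [sub_eq_add_neg, sq]

theorem sum_mul_add_dotProduct_cross_nonneg {A : Matrix (Fin 3) (Fin 3) ℂ} (hA : A.PosSemidef)
    {a b : Fin 3 → ℝ} (hre : ∀ j k, (A j k).re = Matrix.diagonal a j k)
    (hb : ∀ l, (b l : ℂ) = Complex.I * ∑ j, ∑ k, A j k * ((levicivita j k l : ℝ) : ℂ))
    (u v : Fin 3 → ℝ) :
    0 ≤ ∑ j, a j * (u j ^ 2 + v j ^ 2) + b ⬝ᵥ u ⨯₃ v := by
  rw [← re_star_dotProduct_mulVec_mk_eq hre hb]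
  exact (Complex.nonneg_iff.mp (hA.dotProduct_mulVec_nonneg _)).1

theorem dotProduct_le_of_forall_nonneg {a b : Fin 3 → ℝ}
    (h : ∀ u v : Fin 3 → ℝ, 0 ≤ ∑ j, a j * (u j ^ 2 + v j ^ 2) + b ⬝ᵥ u ⨯₃ v)
    {n : Fin 3 → ℝ} (hn : ∑ j, n j ^ 2 = 1) :
    b ⬝ᵥ n ≤ ∑ j, a j * (1 - n j ^ 2) := by
  have frame (i : Fin 3) := h (n ⨯₃ Pi.single i 1) (n ⨯₃ Pi.single i 1 ⨯₃ n)
  have h0 := frame 0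
  have h1 := frame 1
  have h2 := frame 2
  simp only [cross_apply, Fin.sum_univ_three, dotProduct, Fin.isValue, ne_eq, Fin.reduceEq,
    not_false_eq_true, Pi.single_eq_of_ne, Pi.single_eq_same, cons_val_zero, cons_val_one,
    cons_val] at h0 h1 h2 hn ⊢
  linear_combination (h0 + h1 + h2) / 2 + (a 0 * (n 1 ^ 2 + n 2 ^ 2 + 2)
    + a 1 * (n 0 ^ 2 + n 2 ^ 2 + 2) + a 2 * (n 0 ^ 2 + n 1 ^ 2 + 2)
    - 2 * (b 0 * n 0 + b 1 * n 1 + b 2 * n 2)) / 2 * hn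

theorem fM_at_one_nonpos_general
    (A : Matrix (Fin 3) (Fin 3) ℂ) (hA : A.PosSemidef)
    (a b : Fin 3 → ℝ)
    (hre : ∀ j k, (A j k).re = Matrix.diagonal a j k)
    (hb : ∀ l, (b l : ℂ) = Complex.I * ∑ j, ∑ k, A j k * ((levicivita j k l : ℝ) : ℂ)) :
    fM a b 1 ≤ 0 ∧
      ∀ n : Fin 3 → ℝ, (∑ j, n j ^ 2) = 1 →
        (∑ j, b j * n j) ≤ ∑ j, a j * (1 - n j ^ 2) := by
  have bound (n : Fin 3 → ℝ) (hn : ∑ j, n j ^ 2 = 1) : ∑ j, b j * n j ≤ ∑ j, a j * (1 - n j ^ 2) :=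
    dotProduct_le_of_forall_nonneg (sum_mul_add_dotProduct_cross_nonneg hA hre hb) hn
  refine ⟨Real.sSup_le ?_ le_rfl, bound⟩
  rintro _ ⟨n, hn, rfl⟩
  simpa [F] using bound n hn

/-- For a PSD GKS matrix A with real part diag(a₁,a₂,a₃), a₁ ≥ a₂ ≥ a₃ ≥ 0, and
b_l = i Σ_{jk} A_{jk} ε_{jkl}, one has f_M(1) ≤ 0: for every unit vector n,
Σ_j b_j n_j ≤ Σ_j a_j (1 − n_j²). -/
theorem fM_at_one_nonpos
    (A : Matrix (Fin 3) (Fin 3) ℂ) (hA : A.PosSemidef)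
    (a b : Fin 3 → ℝ) (h12 : a 1 ≤ a 0) (h23 : a 2 ≤ a 1) (h3 : 0 ≤ a 2)
    (hre : ∀ j k, (A j k).re = Matrix.diagonal a j k)
    (hb : ∀ l, (b l : ℂ) = Complex.I * ∑ j, ∑ k, A j k * ((levicivita j k l : ℝ) : ℂ)) :
    fM a b 1 ≤ 0 ∧
      ∀ n : Fin 3 → ℝ, (∑ j, n j ^ 2) = 1 →
        (∑ j, b j * n j) ≤ ∑ j, a j * (1 - n j ^ 2) :=
  fM_at_one_nonpos_general A hA a b hre hb
end

section
/- Suppose a₂ > 0, b ≠ 0, and f_M(1) ≤ 0. Then there exists a unique r_T ∈ (0,1] such that f_M(r_T) = 0; moreover f_M(r) > 0 for all r ∈ (0, r_T) and f_M(r) < 0 for all r ∈ (r_T, 1]. -/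
/-!
`fM a b` is the upper envelope of the lines `r ↦ b ⬝ n - r * G n`, `n` on the unit sphere, where
`G n = ∑ j, a j * (1 - n j ^ 2)` is positive on the sphere. An upper envelope of lines over a
compact index set is Lipschitz, and it is strictly decreasing when all slopes `-G n` are negative.
Since `fM a b 0 ≥ |b j| > 0` for any `b j ≠ 0` (take `n = ± e j`) and `fM a b 1 ≤ 0`, the
intermediate value theorem gives the zero in `(0, 1]`; strict monotonicity gives its uniqueness and
the sign pattern.
-/

open Set

noncomputable def upperEnvelope {X : Type*} (K : Set X) (u v : X → ℝ) (r : ℝ) : ℝ :=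
  sSup ((fun x => u x - r * v x) '' K)

section UpperEnvelope

variable {X : Type*} [TopologicalSpace X] {K : Set X} {u v : X → ℝ}

theorem le_upperEnvelope (hK : IsCompact K) (hu : Continuous u) (hv : Continuous v) (r : ℝ)
    {x : X} (hx : x ∈ K) : u x - r * v x ≤ upperEnvelope K u v r :=
  le_csSup (hK.image (by fun_prop)).bddAbove ⟨x, hx, rfl⟩

theorem exists_eq_upperEnvelope (hK : IsCompact K) (hne : K.Nonempty) (hu : Continuous u)
    (hv : Continuous v) (r : ℝ) : ∃ x ∈ K, u x - r * v x = upperEnvelope K u v r :=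
  (hK.image (by fun_prop)).sSup_mem (hne.image _)

theorem strictAnti_upperEnvelope (hK : IsCompact K) (hne : K.Nonempty) (hu : Continuous u)
    (hv : Continuous v) (hv_pos : ∀ x ∈ K, 0 < v x) : StrictAnti (upperEnvelope K u v) := by
  intro r r' hr
  obtain ⟨x, hx, hx_eq⟩ := exists_eq_upperEnvelope hK hne hu hv r'
  calc upperEnvelope K u v r' = u x - r' * v x := hx_eq.symm
    _ < u x - r * v x := by gcongr; exact hv_pos x hx
    _ ≤ upperEnvelope K u v r := le_upperEnvelope hK hu hv r hx

theorem upperEnvelope_le_add_mul_dist (hK : IsCompact K) (hne : K.Nonempty) (hu : Continuous u)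
    (hv : Continuous v) {M : ℝ} (hM : ∀ x ∈ K, |v x| ≤ M) (r r' : ℝ) :
    upperEnvelope K u v r ≤ upperEnvelope K u v r' + M * dist r r' := by
  obtain ⟨x, hx, hx_eq⟩ := exists_eq_upperEnvelope hK hne hu hv r
  have hslope : (r' - r) * v x ≤ M * dist r r' := by
    calc (r' - r) * v x ≤ |r' - r| * |v x| := by rw [← abs_mul]; exact le_abs_self _
      _ ≤ dist r r' * M := by
        rw [Real.dist_eq, abs_sub_comm]
        exact mul_le_mul_of_nonneg_left (hM x hx) (abs_nonneg _)
      _ = M * dist r r' := mul_comm _ _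
  calc upperEnvelope K u v r = (u x - r' * v x) + (r' - r) * v x := by rw [← hx_eq]; ring
    _ ≤ upperEnvelope K u v r' + M * dist r r' :=
      add_le_add (le_upperEnvelope hK hu hv r' hx) hslope

theorem continuous_upperEnvelope (hK : IsCompact K) (hne : K.Nonempty) (hu : Continuous u)
    (hv : Continuous v) : Continuous (upperEnvelope K u v) := by
  obtain ⟨M, hM⟩ := hK.exists_bound_of_continuousOn hv.continuousOn
  exact (LipschitzWith.of_le_add_mul' M
    (upperEnvelope_le_add_mul_dist hK hne hu hv hM)).continuous

end UpperEnvelope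

theorem StrictAnti.exists_zero_Ioc {f : ℝ → ℝ} (hf : Continuous f) (hanti : StrictAnti f)
    {p q : ℝ} (hp : 0 < f p) (hq : f q ≤ 0) :
    ∃ z ∈ Ioc p q, f z = 0 ∧ (∀ z' ∈ Ioc p q, f z' = 0 → z' = z)
      ∧ (∀ r ∈ Ioo p z, 0 < f r) ∧ (∀ r ∈ Ioc z q, f r < 0) := by
  have hpq : p ≤ q := (hanti.lt_iff_gt.mp (hq.trans_lt hp)).le
  obtain ⟨z, hz, hfz⟩ := intermediate_value_Ioc' hpq hf.continuousOn ⟨hq, hp⟩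
  refine ⟨z, hz, hfz, fun z' _ hfz' => hanti.injective (hfz'.trans hfz.symm), ?_, ?_⟩
  · exact fun r hr => hfz ▸ hanti hr.2
  · exact fun r hr => hfz ▸ hanti hr.1

theorem isCompact_sum_sq_eq_one {ι : Type*} [Fintype ι] :
    IsCompact {n : ι → ℝ | ∑ j, n j ^ 2 = 1} := by
  refine Metric.isCompact_of_isClosed_isBounded (isClosed_eq (by fun_prop) continuous_const) ?_
  refine (Metric.isBounded_iff_subset_closedBall 0).mpr ⟨1, fun n hn => ?_⟩
  rw [mem_closedBall_zero_iff, pi_norm_le_iff_of_nonneg zero_le_one]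
  intro j
  have hn : ∑ i, n i ^ 2 = 1 := hn
  rw [Real.norm_eq_abs, abs_le_one_iff_mul_self_le_one, ← sq, ← hn]
  exact Finset.single_le_sum (fun i _ => sq_nonneg (n i)) (Finset.mem_univ j)

theorem exists_sum_sq_eq_one_sum_mul_pos {ι : Type*} [Fintype ι] [DecidableEq ι] {b : ι → ℝ}
    (hb : b ≠ 0) : ∃ n : ι → ℝ, ∑ j, n j ^ 2 = 1 ∧ 0 < ∑ j, b j * n j := by
  obtain ⟨j, hj⟩ : ∃ j, b j ≠ 0 := Function.ne_iff.mp hb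
  refine ⟨Pi.single j (b j / |b j|), ?_, ?_⟩
  · simp [Pi.single_apply, ite_pow, div_pow, sq_abs, hj]
  · simp only [Pi.single_apply, mul_ite, mul_zero, Finset.sum_ite_eq', Finset.mem_univ, if_true]
    have := abs_pos.mpr hj
    rw [← mul_div_assoc, ← sq]
    positivity

theorem sum_mul_one_sub_sq_pos {a n : Fin 3 → ℝ} (h01 : a 1 ≤ a 0) (h2 : 0 ≤ a 2)
    (h1 : 0 < a 1) (hn : ∑ j, n j ^ 2 = 1) : 0 < ∑ j, a j * (1 - n j ^ 2) := by
  rw [Fin.sum_univ_three] at hn ⊢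
  -- on the sphere the sum equals `a 1 + (a 0 - a 1) (n₁² + n₂²) + a 1 n₂² + a 2 (n₀² + n₁²)`
  nlinarith [mul_nonneg (sub_nonneg.2 h01) (add_nonneg (sq_nonneg (n 1)) (sq_nonneg (n 2))),
    mul_nonneg h1.le (sq_nonneg (n 2)),
    mul_nonneg h2 (add_nonneg (sq_nonneg (n 0)) (sq_nonneg (n 1)))]

theorem fM_eq_upperEnvelope (a b : Fin 3 → ℝ) :
    fM a b = upperEnvelope {n : Fin 3 → ℝ | ∑ j, n j ^ 2 = 1} (fun n => ∑ j, b j * n j)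
      (fun n => ∑ j, a j * (1 - n j ^ 2)) :=
  rfl

theorem trap_radius_exists_unique_general (a b : Fin 3 → ℝ)
    (h12 : a 1 ≤ a 0) (h3 : 0 ≤ a 2)
    (ha2 : 0 < a 1) (hb : b ≠ 0) (hf1 : fM a b 1 ≤ 0) :
    ∃ rT ∈ Set.Ioc (0 : ℝ) 1,
      fM a b rT = 0
      ∧ (∀ r' ∈ Set.Ioc (0 : ℝ) 1, fM a b r' = 0 → r' = rT)
      ∧ (∀ r ∈ Set.Ioo (0 : ℝ) rT, 0 < fM a b r)
      ∧ (∀ r ∈ Set.Ioc rT 1, fM a b r < 0) := by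
  obtain ⟨n, hn, hbn⟩ := exists_sum_sq_eq_one_sum_mul_pos hb
  have hK : IsCompact {n : Fin 3 → ℝ | ∑ j, n j ^ 2 = 1} := isCompact_sum_sq_eq_one
  have hu : Continuous fun n : Fin 3 → ℝ => ∑ j, b j * n j := by fun_prop
  have hv : Continuous fun n : Fin 3 → ℝ => ∑ j, a j * (1 - n j ^ 2) := by fun_prop
  rw [fM_eq_upperEnvelope] at hf1 ⊢
  refine StrictAnti.exists_zero_Ioc (continuous_upperEnvelope hK ⟨n, hn⟩ hu hv)
    (strictAnti_upperEnvelope hK ⟨n, hn⟩ hu hv fun m hm => sum_mul_one_sub_sq_pos h12 h3 ha2 hm)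
    ?_ hf1
  calc 0 < ∑ j, b j * n j - 0 * ∑ j, a j * (1 - n j ^ 2) := by rwa [zero_mul, sub_zero]
    _ ≤ _ := le_upperEnvelope hK hu hv 0 hn

/-- If a₂ > 0, b ≠ 0 and f_M(1) ≤ 0, there is a unique trap radius r_T ∈ (0,1] with
f_M(r_T) = 0, f_M > 0 on (0,r_T), and f_M < 0 on (r_T,1]. -/
theorem trap_radius_exists_unique (a b : Fin 3 → ℝ)
    (h12 : a 1 ≤ a 0) (h23 : a 2 ≤ a 1) (h3 : 0 ≤ a 2)
    (ha2 : 0 < a 1) (hb : b ≠ 0) (hf1 : fM a b 1 ≤ 0) :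
    ∃ rT ∈ Set.Ioc (0 : ℝ) 1,
      fM a b rT = 0
      ∧ (∀ r' ∈ Set.Ioc (0 : ℝ) 1, fM a b r' = 0 → r' = rT)
      ∧ (∀ r ∈ Set.Ioo (0 : ℝ) rT, 0 < fM a b r)
      ∧ (∀ r ∈ Set.Ioc rT 1, fM a b r < 0) :=
  trap_radius_exists_unique_general a b h12 h3 ha2 hb hf1
end

section
/- Suppose a₂ > 0, b ≠ 0, f_M(1) ≤ 0, and let r_T ∈ (0,1] be the unique zero of f_M, so that f_M > 0 on (0, r_T). Then for any r_i, r_f ∈ (0, r_T) there exist a time T ≥ 0, a continuous function n̂ : [0,T] → ℝ³ with |n̂(t)| = 1 for all t, and a differentiable function r : [0,T] → (0,1) such that r(0) = r_i, r(T) = r_f, and r′(t) = F(r(t), n̂(t)) for all t ∈ [0,T]. -/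
/-!
A constant control `n` turns the equation into the linear one `r' = B - r A` with
`A = ∑ j, a j (1 - n j ²) ≥ a 1 > 0`, whose solution relaxes exponentially towards `B / A` and
hence passes through every point between its initial value and `B / A`. To steer upwards to
`rf`, take `n` maximising `F a b rf`: then `F a b rf n = fM a b rf > 0`, i.e. `rf < B / A`.
To steer downwards, take `n` or `-n` for any unit vector `n`, since
`F a b rf n + F a b rf (-n) = -2 rf A < 0`.
-/

open Set Real

theorem isCompact_setOf_sum_sq_eq_one (ι : Type*) [Fintype ι] :
    IsCompact {n : ι → ℝ | ∑ j, n j ^ 2 = 1} := by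
  refine (isCompact_univ_pi fun _ => isCompact_Icc (a := (-1 : ℝ)) (b := 1)).of_isClosed_subset
    (isClosed_eq (by fun_prop) continuous_const) fun n hn i _ => ?_
  have : n i ^ 2 ≤ 1 :=
    hn ▸ Finset.single_le_sum (f := fun j => n j ^ 2) (fun j _ => sq_nonneg _) (Finset.mem_univ i)
  exact abs_le.mp (sq_le_one_iff_abs_le_one _ |>.mp this)

theorem exists_F_eq_fM (a b : Fin 3 → ℝ) (r : ℝ) :
    ∃ n : Fin 3 → ℝ, ∑ j, n j ^ 2 = 1 ∧ F a b r n = fM a b r := by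
  have hne : {n : Fin 3 → ℝ | ∑ j, n j ^ 2 = 1}.Nonempty :=
    ⟨Pi.single 0 1, by simp [Pi.single_apply]⟩
  obtain ⟨n, hn, hF⟩ := ((isCompact_setOf_sum_sq_eq_one _).image (by unfold F; fun_prop :
    Continuous (F a b r))).sSup_mem (hne.image _)
  exact ⟨n, hn, hF⟩

theorem a_one_le_sum_mul_one_sub_sq {a : Fin 3 → ℝ} (h10 : a 1 ≤ a 0) (h21 : a 2 ≤ a 1)
    (h2 : 0 ≤ a 2) {n : Fin 3 → ℝ} (hn : ∑ j, n j ^ 2 = 1) :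
    a 1 ≤ ∑ j, a j * (1 - n j ^ 2) := by
  rw [Fin.sum_univ_three] at hn ⊢
  nlinarith [sq_nonneg (n 0), sq_nonneg (n 1), sq_nonneg (n 2)]

theorem F_add_F_neg (a b : Fin 3 → ℝ) (r : ℝ) (n : Fin 3 → ℝ) :
    F a b r n + F a b r (-n) = -2 * r * ∑ j, a j * (1 - n j ^ 2) := by
  simp only [F, Pi.neg_apply, mul_neg, Finset.sum_neg_distrib, even_two, Even.neg_pow, neg_mul]
  ring

theorem exists_F_neg (a b : Fin 3 → ℝ)
    (hA : ∀ n : Fin 3 → ℝ, ∑ j, n j ^ 2 = 1 → 0 < ∑ j, a j * (1 - n j ^ 2))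
    {r : ℝ} (hr : 0 < r) : ∃ n : Fin 3 → ℝ, ∑ j, n j ^ 2 = 1 ∧ F a b r n < 0 := by
  set e : Fin 3 → ℝ := Pi.single 0 1
  have he : ∑ j, e j ^ 2 = 1 := by simp [e, Pi.single_apply]
  have he' : ∑ j, (-e) j ^ 2 = 1 := by simpa using he
  by_contra! h
  nlinarith [F_add_F_neg a b r e, h e he, h (-e) he', mul_pos hr (hA e he)]

theorem hasDerivAt_relaxation (A c r₀ t : ℝ) :
    HasDerivAt (fun t => c + (r₀ - c) * exp (-A * t))
      (A * (c - (c + (r₀ - c) * exp (-A * t)))) t := by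
  have := ((((hasDerivAt_id' t).const_mul (-A)).exp.const_mul (r₀ - c)).const_add c)
  exact this.congr_deriv (by ring)

theorem exists_relaxation_path {A B r₀ r₁ : ℝ} (hA : 0 < A)
    (h : r₀ ≤ r₁ ∧ 0 < B - r₁ * A ∨ B - r₁ * A < 0 ∧ r₁ ≤ r₀) :
    ∃ T, 0 ≤ T ∧ ∃ r : ℝ → ℝ, r 0 = r₀ ∧ r T = r₁ ∧
      (∀ t ∈ Icc 0 T, r t ∈ uIcc r₀ r₁) ∧ ∀ t, HasDerivAt r (B - r t * A) t := by
  obtain ⟨c, rfl⟩ : ∃ c, B = A * c := ⟨B / A, (mul_div_cancel₀ B hA.ne').symm⟩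
  set q := (r₁ - c) / (r₀ - c)
  have hq : 0 < q ∧ q ≤ 1 := by
    rcases h with ⟨h₀₁, h₁⟩ | ⟨h₁, h₀₁⟩
    · have : r₁ < c := by nlinarith
      exact ⟨div_pos_of_neg_of_neg (by linarith) (by linarith),
        (div_le_one_of_neg (by linarith)).mpr (by linarith)⟩
    · have : c < r₁ := by nlinarith
      exact ⟨div_pos (by linarith) (by linarith), (div_le_one (by linarith)).mpr (by linarith)⟩
  have hr₁ : c + (r₀ - c) * q = r₁ := by
    have : r₀ - c ≠ 0 := fun h0 => by simp [q, h0] at hq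
    linear_combination div_mul_cancel₀ (r₁ - c) this
  clear_value q
  refine ⟨-log q / A, div_nonneg (neg_nonneg.mpr (log_nonpos hq.1.le hq.2)) hA.le,
    fun t => c + (r₀ - c) * exp (-A * t), by simp, ?_, fun t ht => ?_, fun t => ?_⟩
  · dsimp only
    rw [show -A * (-log q / A) = log q by field_simp, exp_log hq.1, hr₁]
  · have hq_le : q ≤ exp (-A * t) := by
      rw [← log_le_iff_le_exp hq.1]
      have := mul_le_mul_of_nonneg_left ht.2 hA.le
      rw [mul_div_cancel₀ _ hA.ne'] at this
      linarith
    have hle_one : exp (-A * t) ≤ 1 := exp_le_one_iff.mpr (by nlinarith [ht.1])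
    dsimp only
    rw [← hr₁, mem_uIcc]
    rcases le_total r₀ c with h0 | h0
    · left
      constructor <;> nlinarith [mul_le_mul_of_nonneg_left hq_le (sub_nonneg.mpr h0),
        mul_le_mul_of_nonneg_left hle_one (sub_nonneg.mpr h0)]
    · right
      constructor <;> nlinarith [mul_le_mul_of_nonneg_left hq_le (sub_nonneg.mpr h0),
        mul_le_mul_of_nonneg_left hle_one (sub_nonneg.mpr h0)]
  · convert hasDerivAt_relaxation A c r₀ t using 1
    ring

theorem controllable_inside_trap_general (a b : Fin 3 → ℝ)
    (h12 : a 1 ≤ a 0) (h23 : a 2 ≤ a 1) (h3 : 0 ≤ a 2)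
    (ha2 : 0 < a 1)
    (rT : ℝ) (hrT : rT ∈ Set.Ioc (0 : ℝ) 1)
    (hpos : ∀ r ∈ Set.Ioo (0 : ℝ) rT, 0 < fM a b r)
    (ri rf : ℝ) (hri : ri ∈ Set.Ioo (0 : ℝ) rT) (hrf : rf ∈ Set.Ioo (0 : ℝ) rT) :
    ∃ (T : ℝ), 0 ≤ T ∧
      ∃ (nh : ℝ → Fin 3 → ℝ) (r : ℝ → ℝ),
        (∀ j, ContinuousOn (fun t => nh t j) (Set.Icc 0 T))
        ∧ (∀ t ∈ Set.Icc 0 T, (∑ j, nh t j ^ 2) = 1)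
        ∧ (∀ t ∈ Set.Icc 0 T, r t ∈ Set.Ioo (0 : ℝ) 1)
        ∧ r 0 = ri ∧ r T = rf
        ∧ (∀ t ∈ Set.Icc 0 T,
            HasDerivWithinAt r (F a b (r t) (nh t)) (Set.Icc 0 T) t) := by
  have hA : ∀ n : Fin 3 → ℝ, ∑ j, n j ^ 2 = 1 → 0 < ∑ j, a j * (1 - n j ^ 2) :=
    fun n hn => ha2.trans_le (a_one_le_sum_mul_one_sub_sq h12 h23 h3 hn)
  obtain ⟨n, hn, hdir⟩ : ∃ n : Fin 3 → ℝ, ∑ j, n j ^ 2 = 1 ∧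
      (ri ≤ rf ∧ 0 < F a b rf n ∨ F a b rf n < 0 ∧ rf ≤ ri) := by
    rcases le_or_gt ri rf with hle | hlt
    · obtain ⟨n, hn, hF⟩ := exists_F_eq_fM a b rf
      exact ⟨n, hn, .inl ⟨hle, hF ▸ hpos rf hrf⟩⟩
    · obtain ⟨n, hn, hF⟩ := exists_F_neg a b hA hrf.1
      exact ⟨n, hn, .inr ⟨hF, hlt.le⟩⟩
  obtain ⟨T, hT, r, hstart, hend, hmaps, hderiv⟩ :=
    exists_relaxation_path (A := ∑ j, a j * (1 - n j ^ 2)) (B := ∑ j, b j * n j) (hA n hn) hdir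
  have hsub : uIcc ri rf ⊆ Ioo 0 1 :=
    (ordConnected_Ioo.uIcc_subset hri hrf).trans (Ioo_subset_Ioo_right hrT.2)
  exact ⟨T, hT, fun _ => n, r, fun _ => continuousOn_const, fun _ _ => hn,
    fun t ht => hsub (hmaps t ht), hstart, hend, fun t _ => (hderiv t).hasDerivWithinAt⟩

/-- Inside the trap (0, r_T) the system is controllable: any r_i can be steered to any r_f
by a continuous unit-vector control n̂ and a trajectory r solving r′ = F(r, n̂). -/
theorem controllable_inside_trap (a b : Fin 3 → ℝ)
    (h12 : a 1 ≤ a 0) (h23 : a 2 ≤ a 1) (h3 : 0 ≤ a 2)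
    (ha2 : 0 < a 1) (hb : b ≠ 0) (hf1 : fM a b 1 ≤ 0)
    (rT : ℝ) (hrT : rT ∈ Set.Ioc (0 : ℝ) 1) (hzero : fM a b rT = 0)
    (huniq : ∀ r' ∈ Set.Ioc (0 : ℝ) 1, fM a b r' = 0 → r' = rT)
    (hpos : ∀ r ∈ Set.Ioo (0 : ℝ) rT, 0 < fM a b r)
    (ri rf : ℝ) (hri : ri ∈ Set.Ioo (0 : ℝ) rT) (hrf : rf ∈ Set.Ioo (0 : ℝ) rT) :
    ∃ (T : ℝ), 0 ≤ T ∧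
      ∃ (nh : ℝ → Fin 3 → ℝ) (r : ℝ → ℝ),
        (∀ j, ContinuousOn (fun t => nh t j) (Set.Icc 0 T))
        ∧ (∀ t ∈ Set.Icc 0 T, (∑ j, nh t j ^ 2) = 1)
        ∧ (∀ t ∈ Set.Icc 0 T, r t ∈ Set.Ioo (0 : ℝ) 1)
        ∧ r 0 = ri ∧ r T = rf
        ∧ (∀ t ∈ Set.Icc 0 T,
            HasDerivWithinAt r (F a b (r t) (nh t)) (Set.Icc 0 T) t) :=
  controllable_inside_trap_general a b h12 h23 h3 ha2 rT hrT hpos ri rf hri hrf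
end

section
/- Suppose a₁ = a₂ = a > 0, a₃ = 0, b₁ = b₂ = 0, and b₃ ≠ 0 with |b₃| ≤ 2a. Then for every r > 0: f_m(r) = −|b₃| − 2ar; f_M(r) = |b₃| − 2ar if r ≤ |b₃|/(2a), and f_M(r) = b₃²/(4ar) − ar if r ≥ |b₃|/(2a). In particular, the unique zero of f_M in (0,1] is r_T = |b₃|/(2a). -/
/-!
On the unit sphere `n₁² + n₂² = 1 - n₃²`, so for `a = (a, a, 0)` and `b = (0, 0, b₃)` the rate
depends only on `t = n₃ ∈ [-1, 1]`, through the concave quadratic `b₃ t - a r (1 + t²)`.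
Its minimum over `[-1, 1]` is at the endpoint `t = -sign b₃`; its maximum is at the endpoint
`t = sign b₃` while the vertex `t = b₃ / (2 a r)` lies outside `[-1, 1]`, i.e. for
`r ≤ |b₃| / (2 a)`, and at the vertex otherwise.
-/

open Set

/-- The rate on the unit sphere as a function of `t = n₃`, with `c = a r`. -/
def axialRate (b c t : ℝ) : ℝ :=
  b * t - c * (1 + t ^ 2)

lemma F_axial_eq_axialRate (a b r : ℝ) {n : Fin 3 → ℝ} (hn : ∑ j, n j ^ 2 = 1) :
    F ![a, a, 0] ![0, 0, b] r n = axialRate b (a * r) (n 2) := by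
  simp only [F, axialRate, Fin.sum_univ_three, Matrix.cons_val_zero, Matrix.cons_val_one,
    Matrix.cons_val] at hn ⊢
  linear_combination a * r * hn

lemma image_F_axial_sphere (a b r : ℝ) :
    F ![a, a, 0] ![0, 0, b] r '' {n : Fin 3 → ℝ | ∑ j, n j ^ 2 = 1} =
      axialRate b (a * r) '' Icc (-1) 1 := by
  ext x
  constructor
  · rintro ⟨n, hn, rfl⟩
    have hn' : n 0 ^ 2 + n 1 ^ 2 + n 2 ^ 2 = 1 := by simpa [Fin.sum_univ_three] using hn
    have hsq : n 2 ^ 2 ≤ 1 := by nlinarith [sq_nonneg (n 0), sq_nonneg (n 1)]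
    exact ⟨n 2, abs_le.1 ((sq_le_one_iff_abs_le_one _).1 hsq),
      (F_axial_eq_axialRate a b r hn).symm⟩
  · rintro ⟨t, ht, rfl⟩
    have h : 0 ≤ 1 - t ^ 2 := by nlinarith [ht.1, ht.2]
    have hn : ∑ j, (![√(1 - t ^ 2), 0, t] : Fin 3 → ℝ) j ^ 2 = 1 := by
      simp [Fin.sum_univ_three, Real.sq_sqrt h]
    exact ⟨_, hn, F_axial_eq_axialRate a b r hn⟩

lemma isLeast_axialRate (b : ℝ) {c : ℝ} (hc : 0 ≤ c) :
    IsLeast (axialRate b c '' Icc (-1) 1) (-|b| - 2 * c) := by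
  refine ⟨?_, ?_⟩
  · rcases le_total 0 b with hb | hb
    · exact ⟨-1, by norm_num, by simp [axialRate, abs_of_nonneg hb]; ring⟩
    · exact ⟨1, by norm_num, by simp [axialRate, abs_of_nonpos hb]; ring⟩
  · rintro _ ⟨t, ⟨ht₁, ht₂⟩, rfl⟩
    have hbt : -|b| ≤ b * t := by
      have := mul_le_of_le_one_right (abs_nonneg b) (abs_le.2 ⟨ht₁, ht₂⟩)
      linarith [neg_abs_le (b * t), abs_mul b t]
    have hsq : 0 ≤ c * (1 - t ^ 2) := mul_nonneg hc (by nlinarith)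
    simp only [axialRate]
    nlinarith

lemma isGreatest_axialRate_of_le {b c : ℝ} (h : 2 * c ≤ |b|) :
    IsGreatest (axialRate b c '' Icc (-1) 1) (|b| - 2 * c) := by
  refine ⟨?_, ?_⟩
  · rcases le_total 0 b with hb | hb
    · exact ⟨1, by norm_num, by simp [axialRate, abs_of_nonneg hb]; ring⟩
    · exact ⟨-1, by norm_num, by simp [axialRate, abs_of_nonpos hb]; ring⟩
  · rintro _ ⟨t, ⟨ht₁, ht₂⟩, rfl⟩
    have ht : |t| ≤ 1 := abs_le.2 ⟨ht₁, ht₂⟩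
    have hbt : b * t ≤ |b| * |t| := by rw [← abs_mul]; exact le_abs_self _
    -- for `c ≥ 0`: `c (1 - t²) = c (1 + |t|)(1 - |t|) ≤ 2 c (1 - |t|) ≤ |b| (1 - |t|)`
    have key : c * (1 - t ^ 2) ≤ |b| * (1 - |t|) := by
      rw [← sq_abs t]
      have h1 : 0 ≤ 1 - |t| := sub_nonneg.2 ht
      have h2 : 0 ≤ 1 + |t| := by positivity
      rcases le_total c 0 with hc | hc
      · nlinarith [mul_nonpos_of_nonpos_of_nonneg hc (mul_nonneg h1 h2),
          mul_nonneg (abs_nonneg b) h1]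
      · nlinarith [mul_le_mul_of_nonneg_right h h1, mul_nonneg (mul_nonneg hc h1) h1]
    simp only [axialRate]
    nlinarith

lemma isGreatest_axialRate_of_ge {b c : ℝ} (hc : 0 < c) (h : |b| ≤ 2 * c) :
    IsGreatest (axialRate b c '' Icc (-1) 1) (b ^ 2 / (4 * c) - c) := by
  refine ⟨⟨b / (2 * c), ?_, ?_⟩, ?_⟩
  · rw [mem_Icc, ← abs_le, abs_div, abs_of_pos (by positivity : 0 < 2 * c)]
    exact div_le_one_of_le₀ h (by positivity)
  · simp only [axialRate]; field_simp; ring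
  · rintro _ ⟨t, -, rfl⟩
    have hvertex : b ^ 2 / (4 * c) - c - axialRate b c t = (b - 2 * c * t) ^ 2 / (4 * c) := by
      simp only [axialRate]; field_simp; ring
    have : 0 ≤ (b - 2 * c * t) ^ 2 / (4 * c) := by positivity
    linarith

lemma fm_axial {a r : ℝ} (b : ℝ) (ha : 0 ≤ a) (hr : 0 ≤ r) :
    fm ![a, a, 0] ![0, 0, b] r = -|b| - 2 * a * r := by
  rw [fm, image_F_axial_sphere, (isLeast_axialRate b (mul_nonneg ha hr)).csInf_eq, mul_assoc]

lemma fM_axial_of_le {a b r : ℝ} (h : 2 * a * r ≤ |b|) :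
    fM ![a, a, 0] ![0, 0, b] r = |b| - 2 * a * r := by
  rw [mul_assoc] at h
  rw [fM, image_F_axial_sphere, (isGreatest_axialRate_of_le h).csSup_eq, mul_assoc]

lemma fM_axial_of_ge {a b r : ℝ} (ha : 0 < a) (hr : 0 < r) (h : |b| ≤ 2 * a * r) :
    fM ![a, a, 0] ![0, 0, b] r = b ^ 2 / (4 * a * r) - a * r := by
  rw [mul_assoc] at h
  rw [fM, image_F_axial_sphere, (isGreatest_axialRate_of_ge (mul_pos ha hr) h).csSup_eq,
    mul_assoc]

theorem analytic_case_general (aa b₃ : ℝ) (ha : 0 < aa) :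
    (∀ r : ℝ, 0 < r →
      fm ![aa, aa, 0] ![0, 0, b₃] r = -|b₃| - 2 * aa * r
      ∧ (r ≤ |b₃| / (2 * aa) →
          fM ![aa, aa, 0] ![0, 0, b₃] r = |b₃| - 2 * aa * r)
      ∧ (|b₃| / (2 * aa) ≤ r →
          fM ![aa, aa, 0] ![0, 0, b₃] r = b₃ ^ 2 / (4 * aa * r) - aa * r))
    ∧ fM ![aa, aa, 0] ![0, 0, b₃] (|b₃| / (2 * aa)) = 0
    ∧ (∀ r ∈ Set.Ioc (0 : ℝ) 1,
        fM ![aa, aa, 0] ![0, 0, b₃] r = 0 → r = |b₃| / (2 * aa)) := by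
  have h2a : 0 < 2 * aa := by positivity
  have hT : 2 * aa * (|b₃| / (2 * aa)) = |b₃| := mul_div_cancel₀ _ h2a.ne'
  have le_iff {r : ℝ} : r ≤ |b₃| / (2 * aa) ↔ 2 * aa * r ≤ |b₃| := by
    rw [le_div_iff₀ h2a, mul_comm]
  have ge_iff {r : ℝ} : |b₃| / (2 * aa) ≤ r ↔ |b₃| ≤ 2 * aa * r := by
    rw [div_le_iff₀ h2a, mul_comm]
  refine ⟨fun r hr => ⟨fm_axial b₃ ha.le hr.le, fun h => fM_axial_of_le (le_iff.1 h),
    fun h => fM_axial_of_ge ha hr (ge_iff.1 h)⟩, ?_, ?_⟩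
  · rw [fM_axial_of_le hT.le, hT, sub_self]
  · rintro r ⟨hr, -⟩ hzero
    rw [eq_div_iff h2a.ne', mul_comm]
    rcases le_total r (|b₃| / (2 * aa)) with h | h
    · rw [fM_axial_of_le (le_iff.1 h)] at hzero
      linarith
    · rw [fM_axial_of_ge ha hr (ge_iff.1 h)] at hzero
      have hsq : (2 * aa * r) ^ 2 = |b₃| ^ 2 := by
        rw [sq_abs]
        field_simp at hzero
        linarith
      exact (sq_eq_sq₀ (by positivity) (abs_nonneg _)).1 hsq

/-- The analytically solvable case a₁ = a₂ = a > 0, a₃ = 0, b = (0,0,b₃) with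
0 < |b₃| ≤ 2a: explicit formulas for f_m and f_M, and the trap radius is |b₃|/(2a). -/
theorem analytic_case (aa b₃ : ℝ) (ha : 0 < aa) (hb3 : b₃ ≠ 0) (hle : |b₃| ≤ 2 * aa) :
    (∀ r : ℝ, 0 < r →
      fm ![aa, aa, 0] ![0, 0, b₃] r = -|b₃| - 2 * aa * r
      ∧ (r ≤ |b₃| / (2 * aa) →
          fM ![aa, aa, 0] ![0, 0, b₃] r = |b₃| - 2 * aa * r)
      ∧ (|b₃| / (2 * aa) ≤ r →
          fM ![aa, aa, 0] ![0, 0, b₃] r = b₃ ^ 2 / (4 * aa * r) - aa * r))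
    ∧ fM ![aa, aa, 0] ![0, 0, b₃] (|b₃| / (2 * aa)) = 0
    ∧ (∀ r ∈ Set.Ioc (0 : ℝ) 1,
        fM ![aa, aa, 0] ![0, 0, b₃] r = 0 → r = |b₃| / (2 * aa)) :=
  analytic_case_general aa b₃ ha
end
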